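/- arXiv:0704.3151 — 3 statements merged into one kernel-verified Lean document; each statement's English description precedes it below -/
import Mathlib

section
/- Given a cut set C for a geodesically complete rooted R-tree (T,v), the connected components of T(C) := {x ∈ T : [v,x] ∩ C ≠ ∅} are exactly the subtrees T_c for c ∈ C. -/
open Set Metric

/-- An `ℝ`-tree structure on a metric space `T`: a uniquely arcwise connected metric
space in which the unique arc `[x,y]` is isometric to the interval `[0, dist x y]`.
The field `geod x y` is the isometric parametrization of the unique arc. -/
structure RTree (T : Type*) [MetricSpace T] where
  geod : T → T → ℝ → T
  geod_zero : ∀ x y, geod x y 0 = x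
  geod_dist : ∀ x y, geod x y (dist x y) = y
  geod_isom : ∀ x y, ∀ s ∈ Icc (0 : ℝ) (dist x y), ∀ t ∈ Icc (0 : ℝ) (dist x y),
    dist (geod x y s) (geod x y t) = |s - t|
  arc_unique : ∀ x y : T, ∀ γ : ℝ → T, ∀ a b : ℝ, a ≤ b →
    ContinuousOn γ (Icc a b) → InjOn γ (Icc a b) → γ a = x → γ b = y →
    γ '' Icc a b = geod x y '' Icc 0 (dist x y)

namespace RTree

variable {T : Type*} [MetricSpace T] (R : RTree T)

/-- The unique arc `[x,y]` in the tree. -/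
def seg (x y : T) : Set T := R.geod x y '' Icc 0 (dist x y)

/-- The subtree `T_c = {x ∈ T : c ∈ [v,x]}` determined by `c` (root `v`). -/
def subtree (v c : T) : Set T := {x : T | c ∈ R.seg v x}

/-- `f` is a geodesic ray from `v`: an isometric embedding of `[0,∞)` with `f 0 = v`. -/
def IsRay (R : RTree T) (v : T) (f : ℝ → T) : Prop :=
  f 0 = v ∧ ∀ s ∈ Ici (0 : ℝ), ∀ t ∈ Ici (0 : ℝ), dist (f s) (f t) = |s - t|

/-- The rooted `ℝ`-tree `(T,v)` is geodesically complete: every isometric embedding of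
`[0,t₀]`, `t₀ > 0`, starting at the root `v` extends to a geodesic ray. -/
def GeodComplete (R : RTree T) (v : T) : Prop :=
  ∀ t₀ : ℝ, 0 < t₀ → ∀ f : ℝ → T, f 0 = v →
    (∀ s ∈ Icc (0 : ℝ) t₀, ∀ t ∈ Icc (0 : ℝ) t₀, dist (f s) (f t) = |s - t|) →
    ∃ g : ℝ → T, R.IsRay v g ∧ ∀ s ∈ Icc (0 : ℝ) t₀, g s = f s

end RTree

section Aux

variable {T : Type*} [MetricSpace T]

lemma dist_v_geod (R : RTree T) (v x : T) {t : ℝ} (ht : t ∈ Icc 0 (dist v x)) :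
    dist v (R.geod v x t) = t := by
  have h0 : (0:ℝ) ∈ Icc 0 (dist v x) := ⟨le_refl 0, dist_nonneg⟩
  have h := R.geod_isom v x 0 h0 t ht
  rw [R.geod_zero] at h
  rw [h, zero_sub, abs_neg, abs_of_nonneg ht.1]

lemma contOn (R : RTree T) (x y : T) : ContinuousOn (R.geod x y) (Icc 0 (dist x y)) := by
  apply LipschitzOnWith.continuousOn (K := 1)
  apply LipschitzOnWith.of_dist_le_mul
  intro s hs t ht
  rw [R.geod_isom x y s hs t ht, NNReal.coe_one, one_mul, Real.dist_eq]

lemma geodInjOn (R : RTree T) (x y : T) : InjOn (R.geod x y) (Icc 0 (dist x y)) := by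
  intro s hs t ht h
  have h2 := R.geod_isom x y s hs t ht
  rw [h, dist_self] at h2
  have h3 := abs_eq_zero.mp h2.symm
  linarith [h3]

lemma geod_restrict (R : RTree T) (v x : T) {s t : ℝ} (hs : s ∈ Icc 0 (dist v x))
    (ht : t ∈ Icc 0 s) : R.geod v (R.geod v x s) t = R.geod v x t := by
  set z := R.geod v x s with hz
  have hdz : dist v z = s := dist_v_geod R v x hs
  have himg := R.arc_unique v z (R.geod v x) 0 s hs.1
    ((contOn R v x).mono (Icc_subset_Icc le_rfl hs.2))
    ((geodInjOn R v x).mono (Icc_subset_Icc le_rfl hs.2))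
    (R.geod_zero v x) rfl
  rw [hdz] at himg
  have hmem : R.geod v x t ∈ R.geod v z '' Icc 0 s := by
    rw [← himg]; exact ⟨t, ht, rfl⟩
  obtain ⟨u, hu, hu2⟩ := hmem
  have h1 : dist v (R.geod v z u) = u := dist_v_geod R v z (by rw [hdz]; exact hu)
  have h2 : dist v (R.geod v x t) = t := dist_v_geod R v x ⟨ht.1, ht.2.trans hs.2⟩
  rw [hu2, h2] at h1
  rw [← hu2, h1]

lemma mem_seg_iff (R : RTree T) (v x c : T) :
    c ∈ R.seg v x ↔ dist v c ≤ dist v x ∧ R.geod v x (dist v c) = c := by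
  constructor
  · rintro ⟨t, ht, rfl⟩
    have h := dist_v_geod R v x ht
    rw [h]
    exact ⟨ht.2, rfl⟩
  · rintro ⟨h1, h2⟩
    exact ⟨dist v c, ⟨dist_nonneg, h1⟩, h2⟩

lemma self_mem_seg (R : RTree T) (v x : T) : x ∈ R.seg v x :=
  ⟨dist v x, ⟨dist_nonneg, le_rfl⟩, R.geod_dist v x⟩

end Aux


section Tau

variable {T : Type*} [MetricSpace T]

def meetSet (R : RTree T) (v x y : T) : Set ℝ :=
  {t | t ∈ Icc 0 (min (dist v x) (dist v y)) ∧ R.geod v x t = R.geod v y t}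

lemma zero_mem_meetSet (R : RTree T) (v x y : T) : (0:ℝ) ∈ meetSet R v x y :=
  ⟨⟨le_rfl, le_min dist_nonneg dist_nonneg⟩, by rw [R.geod_zero, R.geod_zero]⟩

lemma bddAbove_meetSet (R : RTree T) (v x y : T) : BddAbove (meetSet R v x y) :=
  ⟨min (dist v x) (dist v y), fun t ht => ht.1.2⟩

noncomputable def tau (R : RTree T) (v x y : T) : ℝ := sSup (meetSet R v x y)

lemma tau_mem_Icc (R : RTree T) (v x y : T) :
    tau R v x y ∈ Icc 0 (min (dist v x) (dist v y)) :=
  ⟨le_csSup (bddAbove_meetSet R v x y) (zero_mem_meetSet R v x y),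
   csSup_le ⟨0, zero_mem_meetSet R v x y⟩ (fun t ht => ht.1.2)⟩

lemma tau_mem (R : RTree T) (v x y : T) : tau R v x y ∈ meetSet R v x y := by
  refine ⟨tau_mem_Icc R v x y, ?_⟩
  by_contra hne
  set τ := tau R v x y with hτ
  have hτIcc := tau_mem_Icc R v x y
  have hpos : 0 < dist (R.geod v x τ) (R.geod v y τ) := dist_pos.mpr hne
  have hlt' : τ - dist (R.geod v x τ) (R.geod v y τ) / 2 < τ := by linarith
  obtain ⟨t, htS, hlt⟩ := exists_lt_of_lt_csSup ⟨0, zero_mem_meetSet R v x y⟩ hlt'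
  have hle : t ≤ τ := le_csSup (bddAbove_meetSet R v x y) htS
  have hxτ : τ ∈ Icc 0 (dist v x) := ⟨hτIcc.1, hτIcc.2.trans (min_le_left _ _)⟩
  have hyτ : τ ∈ Icc 0 (dist v y) := ⟨hτIcc.1, hτIcc.2.trans (min_le_right _ _)⟩
  have hxt : t ∈ Icc 0 (dist v x) := ⟨htS.1.1, htS.1.2.trans (min_le_left _ _)⟩
  have hyt : t ∈ Icc 0 (dist v y) := ⟨htS.1.1, htS.1.2.trans (min_le_right _ _)⟩
  have h1 : dist (R.geod v x τ) (R.geod v x t) = τ - t := by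
    rw [R.geod_isom v x τ hxτ t hxt, abs_of_nonneg (by linarith)]
  have h2 : dist (R.geod v x t) (R.geod v y t) = 0 := by rw [htS.2, dist_self]
  have h3 : dist (R.geod v y t) (R.geod v y τ) = τ - t := by
    rw [R.geod_isom v y t hyt τ hyτ, abs_of_nonpos (by linarith), neg_sub]
  have h4 := dist_triangle4 (R.geod v x τ) (R.geod v x t) (R.geod v y t) (R.geod v y τ)
  rw [h1, h2, h3] at h4
  linarith

lemma meetSet_mem_of_le (R : RTree T) (v x y : T) {t' t : ℝ} (ht' : t' ∈ meetSet R v x y)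
    (h0 : 0 ≤ t) (hle : t ≤ t') : t ∈ meetSet R v x y := by
  have hx' : t' ∈ Icc 0 (dist v x) := ⟨ht'.1.1, ht'.1.2.trans (min_le_left _ _)⟩
  have hy' : t' ∈ Icc 0 (dist v y) := ⟨ht'.1.1, ht'.1.2.trans (min_le_right _ _)⟩
  have h1 := geod_restrict R v x hx' ⟨h0, hle⟩
  have h2 := geod_restrict R v y hy' ⟨h0, hle⟩
  refine ⟨⟨h0, hle.trans ht'.1.2⟩, ?_⟩
  rw [← h1, ht'.2, h2]

lemma meetSet_comm (R : RTree T) (v x y : T) : meetSet R v x y = meetSet R v y x := by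
  ext t
  constructor <;> rintro ⟨⟨h0, hm⟩, he⟩
  · exact ⟨⟨h0, by rwa [min_comm]⟩, he.symm⟩
  · exact ⟨⟨h0, by rwa [min_comm]⟩, he.symm⟩

lemma tau_comm (R : RTree T) (v x y : T) : tau R v x y = tau R v y x := by
  unfold tau; rw [meetSet_comm]

lemma tau_min_le (R : RTree T) (v x y z : T) :
    min (tau R v x y) (tau R v y z) ≤ tau R v x z := by
  set m := min (tau R v x y) (tau R v y z) with hm
  have h0 : 0 ≤ m := le_min (tau_mem_Icc R v x y).1 (tau_mem_Icc R v y z).1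
  have h1 : m ∈ meetSet R v x y :=
    meetSet_mem_of_le R v x y (tau_mem R v x y) h0 (min_le_left _ _)
  have h2 : m ∈ meetSet R v y z :=
    meetSet_mem_of_le R v y z (tau_mem R v y z) h0 (min_le_right _ _)
  apply le_csSup (bddAbove_meetSet R v x z)
  refine ⟨⟨h0, le_min (h1.1.2.trans (min_le_left _ _)) (h2.1.2.trans (min_le_right _ _))⟩, ?_⟩
  rw [h1.2, h2.2]

lemma tau_eq_of_mem_seg (R : RTree T) (v : T) {x c : T} (h : c ∈ R.seg v x) :
    tau R v c x = dist v c := by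
  obtain ⟨hle, heq⟩ := (mem_seg_iff R v x c).mp h
  apply le_antisymm
  · exact (tau_mem_Icc R v c x).2.trans (min_le_left _ _)
  · apply le_csSup (bddAbove_meetSet R v c x)
    refine ⟨⟨dist_nonneg, le_min le_rfl hle⟩, ?_⟩
    rw [R.geod_dist v c, heq]

end Tau

section ClaimB

variable {T : Type*} [MetricSpace T]

lemma dist_eq_tau (R : RTree T) (v x y : T) :
    dist x y = (dist v x - tau R v x y) + (dist v y - tau R v x y) := by
  obtain ⟨⟨ht0, htmin⟩, hpeq⟩ := tau_mem R v x y
  set τ := tau R v x y with hτdef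
  set dx := dist v x with hdx
  set dy := dist v y with hdy
  have htx : τ ≤ dx := htmin.trans (min_le_left _ _)
  have hty : τ ≤ dy := htmin.trans (min_le_right _ _)
  have hdx0 : (0:ℝ) ≤ dx := hdx ▸ dist_nonneg
  have hdy0 : (0:ℝ) ≤ dy := hdy ▸ dist_nonneg
  set f : ℝ → T := fun s => R.geod v x (min dx (max τ (dx - s))) with hfdef
  set g : ℝ → T := fun s => R.geod v y (min dy (max τ (s - dx + 2*τ))) with hgdef
  set γ : ℝ → T := fun s => if s ≤ dx - τ then f s else g s with hγdef
  set L : ℝ := (dx - τ) + (dy - τ) with hLdef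
  have hxmem : ∀ s : ℝ, min dx (max τ (dx - s)) ∈ Icc 0 dx :=
    fun s => ⟨le_min hdx0 (le_trans ht0 (le_max_left _ _)), min_le_left _ _⟩
  have hymem : ∀ s : ℝ, min dy (max τ (s - dx + 2*τ)) ∈ Icc 0 dy :=
    fun s => ⟨le_min hdy0 (le_trans ht0 (le_max_left _ _)), min_le_left _ _⟩
  have hfc : Continuous f := by
    apply (contOn R v x).comp_continuous ?_ hxmem
    exact continuous_const.min ((continuous_const).max (continuous_const.sub continuous_id))
  have hgc : Continuous g := by
    apply (contOn R v y).comp_continuous ?_ hymem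
    exact continuous_const.min ((continuous_const).max
      ((continuous_id.sub continuous_const).add continuous_const))
  have hγc : Continuous γ := by
    apply Continuous.if_le hfc hgc continuous_id continuous_const
    intro s hs
    simp only [id_eq] at hs
    simp only [hfdef, hgdef]
    have e1 : dx - s = τ := by linarith
    have e2 : s - dx + 2*τ = τ := by linarith
    rw [e1, e2, max_self, min_eq_right htx, min_eq_right hty, hpeq]
  have hv1 : ∀ s : ℝ, 0 ≤ s → s ≤ dx - τ → γ s = R.geod v x (dx - s) := by
    intro s h0 h1
    simp only [hγdef, if_pos h1, hfdef]
    congr 1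
    rw [max_eq_right (by linarith), min_eq_right (by linarith)]
  have hv2 : ∀ s : ℝ, dx - τ < s → s ≤ L → γ s = R.geod v y (s - dx + 2*τ) := by
    intro s h1 h2
    simp only [hγdef, if_neg (not_le.mpr h1), hgdef]
    congr 1
    rw [max_eq_right (by linarith), min_eq_right (by rw [hLdef] at h2; linarith)]
  have hd1 : ∀ s : ℝ, 0 ≤ s → s ≤ dx - τ → dist v (γ s) = dx - s := by
    intro s h0 h1
    rw [hv1 s h0 h1]
    exact dist_v_geod R v x ⟨by linarith, by linarith⟩
  have hd2 : ∀ s : ℝ, dx - τ < s → s ≤ L → dist v (γ s) = s - dx + 2*τ := by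
    intro s h1 h2
    rw [hv2 s h1 h2]
    refine dist_v_geod R v y ⟨by linarith, by rw [hLdef] at h2; linarith⟩
  have hcross : ∀ s₁ s₂ : ℝ, 0 ≤ s₁ → s₁ ≤ dx - τ → dx - τ < s₂ → s₂ ≤ L →
      γ s₁ ≠ γ s₂ := by
    intro s₁ s₂ h10 h11 h21 h22 heq
    have e1 := hd1 s₁ h10 h11
    rw [heq, hd2 s₂ h21 h22] at e1
    have hL' : s₂ ≤ (dx - τ) + (dy - τ) := by rw [← hLdef]; exact h22
    have hmem2 : (dx - s₁) ∈ meetSet R v x y := by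
      refine ⟨⟨by linarith, le_min (by linarith) (by linarith)⟩, ?_⟩
      have g1 := hv1 s₁ h10 h11
      have g2 := hv2 s₂ h21 h22
      rw [g1, g2, e1] at heq
      exact heq
    have hsup : dx - s₁ ≤ τ := le_csSup (bddAbove_meetSet R v x y) hmem2
    linarith
  have hinj : InjOn γ (Icc 0 L) := by
    intro s₁ hs₁ s₂ hs₂ heq
    by_cases h1 : s₁ ≤ dx - τ <;> by_cases h2 : s₂ ≤ dx - τ
    · rw [hv1 s₁ hs₁.1 h1, hv1 s₂ hs₂.1 h2] at heq
      have hiso := R.geod_isom v x (dx - s₁) ⟨by linarith, by linarith [hs₁.1]⟩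
        (dx - s₂) ⟨by linarith, by linarith [hs₂.1]⟩
      rw [heq, dist_self] at hiso
      have := abs_eq_zero.mp hiso.symm
      linarith
    · exact absurd heq (hcross s₁ s₂ hs₁.1 h1 (not_le.mp h2) hs₂.2)
    · exact absurd heq.symm (hcross s₂ s₁ hs₂.1 h2 (not_le.mp h1) hs₁.2)
    · rw [hv2 s₁ (not_le.mp h1) hs₁.2, hv2 s₂ (not_le.mp h2) hs₂.2] at heq
      have hb1 : s₁ - dx + 2*τ ∈ Icc 0 dy := by
        constructor
        · linarith [not_le.mp h1]
        · have := hs₁.2; rw [hLdef] at this; linarith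
      have hb2 : s₂ - dx + 2*τ ∈ Icc 0 dy := by
        constructor
        · linarith [not_le.mp h2]
        · have := hs₂.2; rw [hLdef] at this; linarith
      have hiso := R.geod_isom v y (s₁ - dx + 2*τ) hb1 (s₂ - dx + 2*τ) hb2
      rw [heq, dist_self] at hiso
      have := abs_eq_zero.mp hiso.symm
      linarith
  have hγ0 : γ 0 = x := by
    rw [hv1 0 le_rfl (by linarith), sub_zero, hdx]
    exact R.geod_dist v x
  have hγL : γ L = y := by
    rcases eq_or_lt_of_le hty with h | h
    · have hL' : L = dx - τ := by rw [hLdef, ← h]; ring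
      rw [hv1 L (by rw [hL']; linarith) (le_of_eq hL')]
      have e : dx - L = τ := by rw [hL']; ring
      rw [e, hpeq, h, hdy]
      exact R.geod_dist v y
    · rw [hv2 L (by rw [hLdef]; linarith) le_rfl]
      have e : L - dx + 2*τ = dy := by rw [hLdef]; ring
      rw [e, hdy]
      exact R.geod_dist v y
  have himg := R.arc_unique x y γ 0 L (by rw [hLdef]; linarith) hγc.continuousOn hinj hγ0 hγL
  have hpmem : R.geod v x τ ∈ γ '' Icc 0 L := by
    refine ⟨dx - τ, ⟨by linarith, by rw [hLdef]; linarith⟩, ?_⟩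
    rw [hv1 (dx - τ) (by linarith) le_rfl]
    congr 1
    ring
  rw [himg] at hpmem
  obtain ⟨u, hu, hueq⟩ := hpmem
  have h1 : dist x (R.geod v x τ) = u := by
    rw [← hueq]
    have h0' : (0:ℝ) ∈ Icc 0 (dist x y) := ⟨le_rfl, dist_nonneg⟩
    have h := R.geod_isom x y 0 h0' u hu
    rw [R.geod_zero] at h
    rw [h, zero_sub, abs_neg, abs_of_nonneg hu.1]
  have h2 : dist (R.geod v x τ) y = dist x y - u := by
    rw [← hueq]
    have hdm : dist x y ∈ Icc 0 (dist x y) := ⟨dist_nonneg, le_rfl⟩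
    have h := R.geod_isom x y u hu (dist x y) hdm
    rw [R.geod_dist] at h
    rw [h, abs_of_nonpos (by linarith [hu.2]), neg_sub]
  have h3 : dist x (R.geod v x τ) = dx - τ := by
    have h := R.geod_isom v x dx ⟨hdx0, le_of_eq hdx.symm⟩ τ ⟨ht0, htx⟩
    have hgx : R.geod v x dx = x := by rw [hdx]; exact R.geod_dist v x
    rw [hgx] at h
    rw [h, abs_of_nonneg (by linarith)]
  have h4 : dist (R.geod v x τ) y = dy - τ := by
    rw [hpeq]
    have h := R.geod_isom v y τ ⟨ht0, hty⟩ dy ⟨hdy0, le_of_eq hdy.symm⟩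
    have hgy : R.geod v y dy = y := by rw [hdy]; exact R.geod_dist v y
    rw [hgy] at h
    rw [h, abs_of_nonpos (by linarith), neg_sub]
  rw [hLdef]
  linarith

end ClaimB

section Cut

variable {T : Type*} [MetricSpace T]

lemma cut_unique (R : RTree T) (v : T) (hgc : R.GeodComplete v) (C : Set T) (hvC : v ∉ C)
    (hcut : ∀ α : ℝ → T, R.IsRay v α → ∃! t₀ : ℝ, 0 < t₀ ∧ α t₀ ∈ C)
    {x c c' : T} (hc : c ∈ R.seg v x) (hcC : c ∈ C) (hc' : c' ∈ R.seg v x) (hc'C : c' ∈ C) :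
    c = c' := by
  obtain ⟨hle, heq⟩ := (mem_seg_iff R v x c).mp hc
  obtain ⟨hle', heq'⟩ := (mem_seg_iff R v x c').mp hc'
  have hcv : c ≠ v := fun h => hvC (h ▸ hcC)
  have hcv' : c' ≠ v := fun h => hvC (h ▸ hc'C)
  have hc0 : 0 < dist v c := dist_pos.mpr (Ne.symm hcv)
  have hc0' : 0 < dist v c' := dist_pos.mpr (Ne.symm hcv')
  have hx0 : 0 < dist v x := lt_of_lt_of_le hc0 hle
  obtain ⟨α, hαray, hαag⟩ := hgc (dist v x) hx0 (R.geod v x) (R.geod_zero v x) (R.geod_isom v x)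
  obtain ⟨t₀, _, huniq⟩ := hcut α hαray
  have e1 : α (dist v c) = c := by rw [hαag (dist v c) ⟨dist_nonneg, hle⟩, heq]
  have e2 : α (dist v c') = c' := by rw [hαag (dist v c') ⟨dist_nonneg, hle'⟩, heq']
  have u1 : dist v c = t₀ := huniq (dist v c) ⟨hc0, by rw [e1]; exact hcC⟩
  have u2 : dist v c' = t₀ := huniq (dist v c') ⟨hc0', by rw [e2]; exact hc'C⟩
  rw [← heq, ← heq', u1, u2]

lemma tau_lt_left (R : RTree T) (v : T) (hgc : R.GeodComplete v) (C : Set T) (hvC : v ∉ C)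
    (hcut : ∀ α : ℝ → T, R.IsRay v α → ∃! t₀ : ℝ, 0 < t₀ ∧ α t₀ ∈ C)
    {c c' : T} (hcC : c ∈ C) (hc'C : c' ∈ C) (hne : c ≠ c') :
    tau R v c c' < dist v c := by
  have hle : tau R v c c' ≤ dist v c := (tau_mem_Icc R v c c').2.trans (min_le_left _ _)
  rcases lt_or_eq_of_le hle with h | h
  · exact h
  · exfalso
    obtain ⟨⟨h0, hmin⟩, hpeq⟩ := tau_mem R v c c'
    rw [h] at hpeq hmin
    rw [R.geod_dist] at hpeq
    have hcseg : c ∈ R.seg v c' :=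
      (mem_seg_iff R v c' c).mpr ⟨(le_min_iff.mp hmin).2, hpeq.symm⟩
    exact hne (cut_unique R v hgc C hvC hcut hcseg hcC (self_mem_seg R v c') hc'C)

lemma tau_lt_right (R : RTree T) (v : T) (hgc : R.GeodComplete v) (C : Set T) (hvC : v ∉ C)
    (hcut : ∀ α : ℝ → T, R.IsRay v α → ∃! t₀ : ℝ, 0 < t₀ ∧ α t₀ ∈ C)
    {c c' : T} (hcC : c ∈ C) (hc'C : c' ∈ C) (hne : c ≠ c') :
    tau R v c c' < dist v c' := by
  rw [tau_comm]
  exact tau_lt_left R v hgc C hvC hcut hc'C hcC hne.symm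

lemma tau_lt_tc (R : RTree T) (v : T) (hgc : R.GeodComplete v) (C : Set T) (hvC : v ∉ C)
    (hcut : ∀ α : ℝ → T, R.IsRay v α → ∃! t₀ : ℝ, 0 < t₀ ∧ α t₀ ∈ C)
    {z c : T} (hz : (R.seg v z ∩ C).Nonempty) (hcC : c ∈ C) (hne : z ≠ c) :
    tau R v z c < dist v z := by
  have hle : tau R v z c ≤ dist v z := (tau_mem_Icc R v z c).2.trans (min_le_left _ _)
  rcases lt_or_eq_of_le hle with h | h
  · exact h
  · exfalso
    obtain ⟨⟨h0, hmin⟩, hpeq⟩ := tau_mem R v z c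
    rw [h] at hpeq hmin
    rw [R.geod_dist] at hpeq
    have hzled : dist v z ≤ dist v c := (le_min_iff.mp hmin).2
    have hzseg : z ∈ R.seg v c := (mem_seg_iff R v c z).mpr ⟨hzled, hpeq.symm⟩
    obtain ⟨c₃, h3seg, h3C⟩ := hz
    obtain ⟨h3le, h3eq⟩ := (mem_seg_iff R v z c₃).mp h3seg
    have hdz_mem : dist v z ∈ meetSet R v z c := h ▸ tau_mem R v z c
    have hd : dist v c₃ ∈ meetSet R v z c :=
      meetSet_mem_of_le R v z c hdz_mem dist_nonneg h3le
    have h3seg' : c₃ ∈ R.seg v c :=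
      (mem_seg_iff R v c c₃).mpr ⟨h3le.trans hzled, by rw [← hd.2, h3eq]⟩
    have h33 : c₃ = c :=
      cut_unique R v hgc C hvC hcut h3seg' h3C (self_mem_seg R v c) hcC
    have hdd : dist v z = dist v c := le_antisymm hzled (by rw [← h33]; exact h3le)
    exact hne (by rw [hpeq, hdd, R.geod_dist])

lemma subtree_preconnected (R : RTree T) (v c : T) : IsPreconnected (R.subtree v c) := by
  apply isPreconnected_of_forall c
  intro x hx
  obtain ⟨hle, heq⟩ := (mem_seg_iff R v x c).mp hx
  refine ⟨R.geod v x '' Icc (dist v c) (dist v x), ?_, ?_, ?_, ?_⟩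
  · rintro z ⟨s, hs, rfl⟩
    have hs' : s ∈ Icc 0 (dist v x) := ⟨dist_nonneg.trans hs.1, hs.2⟩
    have hdz : dist v (R.geod v x s) = s := dist_v_geod R v x hs'
    show c ∈ R.seg v (R.geod v x s)
    apply (mem_seg_iff R v (R.geod v x s) c).mpr
    constructor
    · rw [hdz]; exact hs.1
    · rw [geod_restrict R v x hs' ⟨dist_nonneg, hs.1⟩, heq]
  · exact ⟨dist v c, ⟨le_rfl, hle⟩, heq⟩
  · exact ⟨dist v x, ⟨hle, le_rfl⟩, R.geod_dist v x⟩
  · exact (isPreconnected_Icc).image _ ((contOn R v x).mono (Icc_subset_Icc dist_nonneg le_rfl))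

end Cut

/-- Given a cut set `C` for `(T,v)`, the connected components of
`T(C) = {x : [v,x] ∩ C ≠ ∅}` are exactly the subtrees `T_c`, `c ∈ C`. -/
theorem stmt_12 {T : Type*} [MetricSpace T] (R : RTree T) (v : T)
    (hgc : R.GeodComplete v) (C : Set T) (hvC : v ∉ C)
    (hcut : ∀ α : ℝ → T, R.IsRay v α → ∃! t₀ : ℝ, 0 < t₀ ∧ α t₀ ∈ C) :
    (∀ c ∈ C, connectedComponentIn {x : T | (R.seg v x ∩ C).Nonempty} c = R.subtree v c) ∧
    ∀ x ∈ {x : T | (R.seg v x ∩ C).Nonempty},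
      ∃ c ∈ C, connectedComponentIn {x : T | (R.seg v x ∩ C).Nonempty} x = R.subtree v c := by
  classical
  set TC := {x : T | (R.seg v x ∩ C).Nonempty} with hTCdef
  have hsubTC : ∀ c ∈ C, R.subtree v c ⊆ TC := fun c hcC z hz => ⟨c, hz, hcC⟩
  have hselfsub : ∀ c : T, c ∈ R.subtree v c := fun c => self_mem_seg R v c
  have hA : ∀ c ∈ C, connectedComponentIn TC c = R.subtree v c := by
    intro c₁ hc₁C
    have hc₁TC : c₁ ∈ TC := ⟨c₁, self_mem_seg R v c₁, hc₁C⟩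
    apply Subset.antisymm
    · intro y hyQ
      by_contra hy
      set Q := connectedComponentIn TC c₁ with hQdef
      have hQpre : IsPreconnected Q := isPreconnected_connectedComponentIn
      have hQTC : Q ⊆ TC := connectedComponentIn_subset _ _
      have hyTC : y ∈ TC := hQTC hyQ
      obtain ⟨c₂, hc₂seg, hc₂C⟩ := hyTC
      have hne : c₂ ≠ c₁ := by
        intro h
        exact hy (show c₁ ∈ R.seg v y from h ▸ hc₂seg)
      set σ := (tau R v c₁ c₂ + dist v c₁)/2 with hσdef
      have h13a : tau R v c₁ c₂ < dist v c₁ :=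
        tau_lt_left R v hgc C hvC hcut hc₁C hc₂C (Ne.symm hne)
      have h13b : tau R v c₁ c₂ < dist v c₂ :=
        tau_lt_right R v hgc C hvC hcut hc₁C hc₂C (Ne.symm hne)
      have hσ1 : tau R v c₁ c₂ < σ := by rw [hσdef]; linarith
      have hσ2 : σ < dist v c₁ := by rw [hσdef]; linarith
      set A := {z : T | z ∈ TC ∧ σ ≤ tau R v z c₁} with hAdef
      set U := ⋃ z ∈ A, ball z (dist v z - σ) with hUdef
      set V := {w : T | dist v w + dist v c₁ - dist w c₁ < 2*σ} with hVdef
      have hUopen : IsOpen U := isOpen_biUnion (fun z _ => isOpen_ball)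
      have hVopen : IsOpen V := by
        rw [hVdef]
        apply isOpen_lt ?_ continuous_const
        exact ((continuous_const.dist continuous_id).add continuous_const).sub
          (continuous_id.dist continuous_const)
      have hVtau : ∀ w : T, (w ∈ V ↔ tau R v w c₁ < σ) := by
        intro w
        have hds := dist_eq_tau R v w c₁
        rw [hVdef]
        constructor
        · intro hw; simp only [mem_setOf_eq] at hw; linarith
        · intro hw; simp only [mem_setOf_eq]; linarith
      have hUtau : ∀ w ∈ U, σ ≤ tau R v w c₁ := by
        intro w hw
        rw [hUdef] at hw
        simp only [mem_iUnion, exists_prop] at hw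
        obtain ⟨z, hzA, hzball⟩ := hw
        rw [hAdef] at hzA
        obtain ⟨hzTC, hzσ⟩ := hzA
        rw [mem_ball] at hzball
        have htri : dist v z ≤ dist v w + dist w z := dist_triangle v w z
        have hwz : σ < tau R v w z := by
          have hds := dist_eq_tau R v w z
          have hcm : dist w z = dist z w := dist_comm w z
          linarith
        have hm := tau_min_le R v w z c₁
        have hmm : σ ≤ min (tau R v w z) (tau R v z c₁) := le_min hwz.le hzσ
        linarith [hmm.trans hm]
      have hcover : Q ⊆ U ∪ V := by
        intro z hzQ
        have hzTC := hQTC hzQ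
        by_cases hcase : tau R v z c₁ < σ
        · exact Or.inr ((hVtau z).mpr hcase)
        · left
          have hσz : σ ≤ tau R v z c₁ := not_lt.mp hcase
          have hzlt : σ < dist v z := by
            by_cases hz1 : z = c₁
            · rw [hz1]; exact hσ2
            · exact lt_of_le_of_lt hσz (tau_lt_tc R v hgc C hvC hcut hzTC hc₁C hz1)
          rw [hUdef]
          exact mem_biUnion (show z ∈ A from ⟨hzTC, hσz⟩) (mem_ball_self (by linarith))
      have hc₁Q : c₁ ∈ Q := mem_connectedComponentIn hc₁TC
      have hτc₁ : tau R v c₁ c₁ = dist v c₁ := tau_eq_of_mem_seg R v (self_mem_seg R v c₁)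
      have hc₁A : c₁ ∈ A := ⟨hc₁TC, by rw [hτc₁]; exact hσ2.le⟩
      have hc₁U : c₁ ∈ U := by
        rw [hUdef]
        exact mem_biUnion hc₁A (mem_ball_self (by linarith))
      have hyV : y ∈ V := by
        apply (hVtau y).mpr
        by_contra hcon
        have hσy : σ ≤ tau R v c₁ y := by rw [tau_comm]; exact not_lt.mp hcon
        have h9 : tau R v y c₂ = dist v c₂ := by
          rw [tau_comm]; exact tau_eq_of_mem_seg R v hc₂seg
        have hm := tau_min_le R v c₁ y c₂
        rw [h9] at hm
        rcases le_total (tau R v c₁ y) (dist v c₂) with hmin | hmin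
        · rw [min_eq_left hmin] at hm; linarith
        · rw [min_eq_right hmin] at hm; linarith
      obtain ⟨w, hwQ, hwU, hwV⟩ := hQpre U V hUopen hVopen hcover ⟨c₁, hc₁Q, hc₁U⟩ ⟨y, hyQ, hyV⟩
      have h1 := hUtau w hwU
      have h2 := (hVtau w).mp hwV
      linarith
    · exact (subtree_preconnected R v c₁).subset_connectedComponentIn (hselfsub c₁)
        (hsubTC c₁ hc₁C)
  refine ⟨hA, ?_⟩
  intro x hx
  obtain ⟨c, hcseg, hcC⟩ := hx
  refine ⟨c, hcC, ?_⟩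
  have hxsub : x ∈ R.subtree v c := hcseg
  have hccomp : c ∈ connectedComponentIn TC x :=
    (subtree_preconnected R v c).subset_connectedComponentIn hxsub (hsubTC c hcC) (hselfsub c)
  rw [connectedComponentIn_eq hccomp, hA c hcC]
end

section
/- If (T,v) is a rooted R-tree, then the end space end(T,v), with d_e(f,g) = e^{-t₀} where t₀ = sup{t ≥ 0 : f(t) = g(t)} for f ≠ g (and d_e(f,f) = 0), is a complete ultrametric space of diameter at most 1. -/
open Set Metric

namespace RTree

variable {T : Type*} [MetricSpace T]

/-- The end space of a rooted `ℝ`-tree `(T,v)`: geodesic rays starting at `v`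
(normalized to be constantly `v` on `(-∞,0]`, so that a ray is determined by its
values on `[0,∞)`). -/
def endSpace (R : RTree T) (v : T) : Type _ :=
  {f : ℝ → T // R.IsRay v f ∧ ∀ t : ℝ, t ≤ 0 → f t = v}

open Classical in
/-- The end-space metric `d_e(f,g) = e^{-t₀}`, `t₀ = sup {t ≥ 0 : f t = g t}`. -/
noncomputable def endDist (R : RTree T) (v : T) (f g : R.endSpace v) : ℝ :=
  if f = g then 0 else Real.exp (-(sSup {t : ℝ | 0 ≤ t ∧ f.1 t = g.1 t}))

end RTree

namespace RTree

variable {T : Type*} [MetricSpace T]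

lemma ray_dist_root {R : RTree T} {v : T} {f : ℝ → T} (hf : R.IsRay v f) {s : ℝ}
    (hs : 0 ≤ s) : dist v (f s) = s := by
  rw [← hf.1, hf.2 0 (mem_Ici.2 le_rfl) s (mem_Ici.2 hs), zero_sub, abs_neg, abs_of_nonneg hs]

lemma ray_agree {R : RTree T} {v : T} {f g : ℝ → T} (hf : R.IsRay v f) (hg : R.IsRay v g)
    {t : ℝ} (ht : 0 ≤ t) (hfg : f t = g t) : ∀ s ∈ Icc (0:ℝ) t, f s = g s := by
  have cont : ∀ h : ℝ → T, R.IsRay v h → ContinuousOn h (Icc 0 t) := by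
    intro h hh
    refine (LipschitzOnWith.of_dist_le_mul (K := 1) fun x hx y hy => ?_).continuousOn
    rw [hh.2 x (mem_Ici.2 hx.1) y (mem_Ici.2 hy.1), Real.dist_eq, NNReal.coe_one, one_mul]
  have inj : ∀ h : ℝ → T, R.IsRay v h → InjOn h (Icc 0 t) := by
    intro h hh a ha b hb hab
    have := hh.2 a (mem_Ici.2 ha.1) b (mem_Ici.2 hb.1)
    rw [hab, dist_self] at this
    have := abs_eq_zero.1 this.symm
    linarith [sub_eq_zero.1 this]
  have h1 := R.arc_unique v (f t) f 0 t ht (cont f hf) (inj f hf) hf.1 rfl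
  have h2 := R.arc_unique v (g t) g 0 t ht (cont g hg) (inj g hg) hg.1 rfl
  rw [← hfg] at h2
  intro s hs
  have : f s ∈ g '' Icc 0 t := by
    rw [h2, ← h1]; exact mem_image_of_mem f hs
  obtain ⟨s', hs', he⟩ := this
  have : s' = s := by
    have e1 := ray_dist_root hg hs'.1
    rw [he, ray_dist_root hf hs.1] at e1
    exact e1.symm
  subst this; exact he.symm

lemma zero_mem_agree {R : RTree T} {v : T} (f g : R.endSpace v) :
    (0:ℝ) ∈ {t : ℝ | 0 ≤ t ∧ f.1 t = g.1 t} :=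
  ⟨le_rfl, by rw [f.2.1.1, g.2.1.1]⟩

lemma eq_of_not_bddAbove {R : RTree T} {v : T} {f g : R.endSpace v}
    (h : ¬ BddAbove {t : ℝ | 0 ≤ t ∧ f.1 t = g.1 t}) : f = g := by
  apply Subtype.ext; funext t
  rcases le_or_gt t 0 with ht | ht
  · rw [f.2.2 t ht, g.2.2 t ht]
  · obtain ⟨s, hs, hts⟩ := not_bddAbove_iff.1 h t
    exact ray_agree f.2.1 g.2.1 hs.1 hs.2 t ⟨ht.le, hts.le⟩

lemma bddAbove_agree {R : RTree T} {v : T} {f g : R.endSpace v} (h : f ≠ g) :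
    BddAbove {t : ℝ | 0 ≤ t ∧ f.1 t = g.1 t} :=
  by_contra fun hb => h (eq_of_not_bddAbove hb)

lemma mem_agree_of_lt {R : RTree T} {v : T} {f g : R.endSpace v} {s : ℝ} (h0 : 0 ≤ s)
    (hs : s < sSup {t : ℝ | 0 ≤ t ∧ f.1 t = g.1 t}) :
    s ∈ {t : ℝ | 0 ≤ t ∧ f.1 t = g.1 t} := by
  obtain ⟨t, ht, hst⟩ := exists_lt_of_lt_csSup ⟨0, zero_mem_agree f g⟩ hs
  exact ⟨h0, ray_agree f.2.1 g.2.1 ht.1 ht.2 s ⟨h0, hst.le⟩⟩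

lemma sSup_agree_nonneg {R : RTree T} {v : T} {f g : R.endSpace v} (h : f ≠ g) :
    0 ≤ sSup {t : ℝ | 0 ≤ t ∧ f.1 t = g.1 t} :=
  le_csSup (bddAbove_agree h) (zero_mem_agree f g)

lemma agree_of_endDist_lt {R : RTree T} {v : T} {f g : R.endSpace v} {t : ℝ}
    (h : R.endDist v f g < Real.exp (-t)) : ∀ s, 0 ≤ s → s ≤ t → f.1 s = g.1 s := by
  intro s h0 hst
  by_cases hfg : f = g
  · rw [hfg]
  · rw [endDist, if_neg hfg] at h
    rw [Real.exp_lt_exp, neg_lt_neg_iff] at h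
    exact (mem_agree_of_lt h0 (lt_of_le_of_lt hst h)).2

lemma endDist_le_of_agree {R : RTree T} {v : T} {f g : R.endSpace v} {t : ℝ}
    (h0 : 0 ≤ t) (h : f.1 t = g.1 t) : R.endDist v f g ≤ Real.exp (-t) := by
  by_cases hfg : f = g
  · rw [endDist, if_pos hfg]; positivity
  · rw [endDist, if_neg hfg]
    rw [Real.exp_le_exp, neg_le_neg_iff]
    exact le_csSup (bddAbove_agree hfg) ⟨h0, h⟩

end RTree

/-- The end space of a rooted `ℝ`-tree, with `d_e`, is a complete ultrametric space of
diameter at most `1`. -/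
theorem stmt_13 {T : Type*} [MetricSpace T] (R : RTree T) (v : T) :
    (∀ f g : R.endSpace v, R.endDist v f g = 0 ↔ f = g) ∧
    (∀ f g : R.endSpace v, R.endDist v f g = R.endDist v g f) ∧
    (∀ f g h : R.endSpace v,
      R.endDist v f g ≤ max (R.endDist v f h) (R.endDist v h g)) ∧
    (∀ f g : R.endSpace v, R.endDist v f g ≤ 1) ∧
    (∀ u : ℕ → R.endSpace v,
      (∀ ε : ℝ, 0 < ε → ∃ N : ℕ, ∀ m ≥ N, ∀ n ≥ N, R.endDist v (u m) (u n) < ε) →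
      ∃ l : R.endSpace v,
        ∀ ε : ℝ, 0 < ε → ∃ N : ℕ, ∀ n ≥ N, R.endDist v (u n) l < ε) := by
  constructor
  · -- d = 0 iff equal
    intro f g
    constructor
    · intro h
      by_contra hfg
      rw [RTree.endDist, if_neg hfg] at h
      exact Real.exp_ne_zero _ h
    · intro h; rw [RTree.endDist, if_pos h]
  refine ⟨?_, ?_, ?_, ?_⟩
  · -- symmetry
    intro f g
    by_cases h : f = g
    · rw [h]
    · rw [RTree.endDist, RTree.endDist, if_neg h, if_neg (Ne.symm h)]
      have : {t : ℝ | 0 ≤ t ∧ f.1 t = g.1 t} = {t : ℝ | 0 ≤ t ∧ g.1 t = f.1 t} := by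
        ext t; exact and_congr_right fun _ => eq_comm
      rw [this]
  · -- ultrametric
    intro f g h
    by_cases hfg : f = g
    · rw [RTree.endDist, if_pos hfg]
      have : (0:ℝ) ≤ R.endDist v f h := by
        rw [RTree.endDist]; split_ifs with h'
        · exact le_rfl
        · positivity
      exact le_max_of_le_left this
    by_cases hfh : f = h
    · rw [hfh]; exact le_max_right _ _
    by_cases hhg : h = g
    · rw [← hhg]; exact le_max_left _ _
    rw [RTree.endDist, RTree.endDist, RTree.endDist, if_neg hfg, if_neg hfh, if_neg hhg]
    set a := sSup {t : ℝ | 0 ≤ t ∧ f.1 t = h.1 t} with ha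
    set b := sSup {t : ℝ | 0 ≤ t ∧ h.1 t = g.1 t} with hb
    set c := sSup {t : ℝ | 0 ≤ t ∧ f.1 t = g.1 t} with hc
    have hmin : min a b ≤ c := by
      by_contra hlt
      push_neg at hlt
      obtain ⟨s, hcs, hsm⟩ := exists_between hlt
      have h0s : 0 ≤ s := le_trans (RTree.sSup_agree_nonneg hfg) hcs.le
      have m1 := RTree.mem_agree_of_lt (f := f) (g := h) h0s (lt_of_lt_of_le hsm (min_le_left _ _))
      have m2 := RTree.mem_agree_of_lt (f := h) (g := g) h0s (lt_of_lt_of_le hsm (min_le_right _ _))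
      have : s ∈ {t : ℝ | 0 ≤ t ∧ f.1 t = g.1 t} := ⟨h0s, m1.2.trans m2.2⟩
      have := le_csSup (RTree.bddAbove_agree hfg) this
      exact absurd hcs (not_lt.2 this)
    calc Real.exp (-c) ≤ Real.exp (-(min a b)) := by
          rw [Real.exp_le_exp]; linarith
      _ ≤ max (Real.exp (-a)) (Real.exp (-b)) := by
          rcases min_cases a b with ⟨he, _⟩ | ⟨he, _⟩
          · rw [he]; exact le_max_left _ _
          · rw [he]; exact le_max_right _ _
  · -- diameter ≤ 1
    intro f g
    by_cases h : f = g
    · rw [RTree.endDist, if_pos h]; norm_num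
    · rw [RTree.endDist, if_neg h]
      have := RTree.sSup_agree_nonneg h
      calc Real.exp (-(sSup {t : ℝ | 0 ≤ t ∧ f.1 t = g.1 t})) ≤ Real.exp 0 := by
            rw [Real.exp_le_exp]; linarith
        _ = 1 := Real.exp_zero
  · -- completeness
    intro u hc
    set φ : ℝ → ℕ := fun t => (hc (Real.exp (-t)) (Real.exp_pos _)).choose with hφ
    have spec : ∀ t : ℝ, ∀ m ≥ φ t, ∀ n ≥ φ t, R.endDist v (u m) (u n) < Real.exp (-t) :=
      fun t => (hc (Real.exp (-t)) (Real.exp_pos _)).choose_spec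
    set l : ℝ → T := fun t => (u (φ t)).1 t with hl
    have key : ∀ t s : ℝ, 0 ≤ s → s ≤ t → l s = (u (φ t)).1 s := by
      intro t s h0 hst
      have e1 := RTree.agree_of_endDist_lt
        (spec s (max (φ s) (φ t)) (le_max_left _ _) (φ s) le_rfl) s h0 le_rfl
      have e2 := RTree.agree_of_endDist_lt
        (spec t (max (φ s) (φ t)) (le_max_right _ _) (φ t) le_rfl) s h0 hst
      simp only [hl]
      rw [← e1, e2]
    have lray : R.IsRay v l ∧ ∀ t : ℝ, t ≤ 0 → l t = v := by
      refine ⟨⟨(u (φ 0)).2.1.1, ?_⟩, fun t ht => (u (φ t)).2.2 t ht⟩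
      have main : ∀ s ∈ Ici (0:ℝ), ∀ t ∈ Ici (0:ℝ), s ≤ t → dist (l s) (l t) = |s - t| := by
        intro s hs t ht hst
        rw [key t s hs hst]
        exact (u (φ t)).2.1.2 s hs t ht
      intro s hs t ht
      rcases le_total s t with h' | h'
      · exact main s hs t ht h'
      · rw [dist_comm, abs_sub_comm]; exact main t ht s hs h'
    refine ⟨⟨l, lray⟩, ?_⟩
    intro ε hε
    set t : ℝ := max (1 - Real.log ε) 0 with htd
    have hexp : Real.exp (-t) < ε := by
      have h1 : Real.exp (-t) ≤ Real.exp (Real.log ε - 1) := by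
        rw [Real.exp_le_exp]
        have : 1 - Real.log ε ≤ t := le_max_left _ _
        linarith
      have h2 : Real.exp (Real.log ε - 1) = ε / Real.exp 1 := by
        rw [Real.exp_sub, Real.exp_log hε]
      have h3 : (1:ℝ) < Real.exp 1 := by
        have := Real.add_one_le_exp 1; linarith
      calc Real.exp (-t) ≤ ε / Real.exp 1 := by rw [← h2]; exact h1
        _ < ε := div_lt_self hε h3
    refine ⟨φ t, fun n hn => ?_⟩
    have ht0 : 0 ≤ t := le_max_right _ _
    have agr : (u n).1 t = l t := by
      have e1 := RTree.agree_of_endDist_lt (spec t n hn (φ t) le_rfl) t ht0 le_rfl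
      exact e1.trans (key t t ht0 le_rfl).symm
    calc R.endDist v (u n) ⟨l, lray⟩ ≤ Real.exp (-t) :=
          RTree.endDist_le_of_agree ht0 agr
      _ < ε := hexp
end

section
/- Let U be a complete ultrametric space of diameter ≤ 1, and let T_U = (U × [0,∞))/∼ where (α,t) ∼ (β,t') iff t = t' and d(α,β) ≤ e^{-t}, with metric D([x,t],[y,s]) = |t-s| if x = y and D([x,t],[y,s]) = t + s − 2·min{−ln d(x,y), t, s} otherwise. Then D is a well-defined metric on T_U. -/
/-- The identification `(α,t) ∼ (β,t')` iff `t = t'` and `d(α,β) ≤ e^{-t}` used to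
build the tree `T_U` of an ultrametric space `U`. -/
def treeRel {U : Type*} [MetricSpace U] (p q : U × ℝ) : Prop :=
  p.2 = q.2 ∧ dist p.1 q.1 ≤ Real.exp (-p.2)

open Classical in
/-- The distance on representatives: `D((x,t),(y,s)) = |t - s|` if `x = y`, and
`t + s - 2 min{-ln d(x,y), t, s}` otherwise. -/
noncomputable def treeDist {U : Type*} [MetricSpace U] (p q : U × ℝ) : ℝ :=
  if p.1 = q.1 then |p.2 - q.2|
  else p.2 + q.2 - 2 * min (min (-Real.log (dist p.1 q.1)) p.2) q.2

namespace TreeAux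

variable {U : Type*} [MetricSpace U]

open Classical in
/-- The "gluing level" of two representatives. -/
noncomputable def M (p q : U × ℝ) : ℝ :=
  if p.1 = q.1 then min p.2 q.2
  else min (min (-Real.log (dist p.1 q.1)) p.2) q.2

lemma M_eq_of_eq {p q : U × ℝ} (h : p.1 = q.1) : M p q = min p.2 q.2 := by
  unfold M; rw [if_pos h]

lemma M_eq_of_ne {p q : U × ℝ} (h : p.1 ≠ q.1) :
    M p q = min (min (-Real.log (dist p.1 q.1)) p.2) q.2 := by
  unfold M; rw [if_neg h]

lemma treeDist_eq (p q : U × ℝ) : treeDist p q = p.2 + q.2 - 2 * M p q := by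
  by_cases h : p.1 = q.1
  · unfold treeDist
    rw [if_pos h, M_eq_of_eq h]
    have h1 := max_add_min p.2 q.2
    have h2 := max_sub_min_eq_abs p.2 q.2
    have h3 := abs_sub_comm p.2 q.2
    linarith
  · unfold treeDist
    rw [if_neg h, M_eq_of_ne h]

lemma M_le_left (p q : U × ℝ) : M p q ≤ p.2 := by
  by_cases h : p.1 = q.1
  · rw [M_eq_of_eq h]; exact min_le_left _ _
  · rw [M_eq_of_ne h]; exact le_trans (min_le_left _ _) (min_le_right _ _)

lemma M_le_right (p q : U × ℝ) : M p q ≤ q.2 := by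
  by_cases h : p.1 = q.1
  · rw [M_eq_of_eq h]; exact min_le_right _ _
  · rw [M_eq_of_ne h]; exact min_le_right _ _

lemma M_symm (p q : U × ℝ) : M p q = M q p := by
  by_cases h : p.1 = q.1
  · rw [M_eq_of_eq h, M_eq_of_eq h.symm, min_comm]
  · rw [M_eq_of_ne h, M_eq_of_ne (Ne.symm h), dist_comm, min_right_comm]

lemma M_le_L {p q : U × ℝ} (h : p.1 ≠ q.1) :
    M p q ≤ -Real.log (dist p.1 q.1) := by
  rw [M_eq_of_ne h]
  exact le_trans (min_le_left _ _) (min_le_left _ _)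

lemma neg_log_ultra (hu : ∀ x y z : U, dist x y ≤ max (dist x z) (dist z y))
    {x y z : U} (hxz : x ≠ z) :
    min (-Real.log (dist x y)) (-Real.log (dist y z)) ≤ -Real.log (dist x z) := by
  have h := hu x z y
  rcases max_cases (dist x y) (dist y z) with ⟨he, _⟩ | ⟨he, _⟩ <;> rw [he] at h
  · have := Real.log_le_log (dist_pos.2 hxz) h
    exact le_trans (min_le_left _ _) (by linarith)
  · have := Real.log_le_log (dist_pos.2 hxz) h
    exact le_trans (min_le_right _ _) (by linarith)

lemma M_ultra (hu : ∀ x y z : U, dist x y ≤ max (dist x z) (dist z y))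
    (p q r : U × ℝ) : min (M p q) (M q r) ≤ M p r := by
  have h1 : min (M p q) (M q r) ≤ p.2 := le_trans (min_le_left _ _) (M_le_left _ _)
  have h3 : min (M p q) (M q r) ≤ r.2 := le_trans (min_le_right _ _) (M_le_right _ _)
  by_cases hpr : p.1 = r.1
  · rw [M_eq_of_eq hpr]
    exact le_min h1 h3
  · rw [M_eq_of_ne hpr]
    refine le_min (le_min ?_ h1) h3
    by_cases hpq : p.1 = q.1
    · have hqr : q.1 ≠ r.1 := fun h => hpr (hpq.trans h)
      have : M q r ≤ -Real.log (dist q.1 r.1) := M_le_L hqr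
      rw [← hpq] at this
      exact le_trans (min_le_right _ _) this
    · by_cases hqr : q.1 = r.1
      · have : M p q ≤ -Real.log (dist p.1 q.1) := M_le_L hpq
        rw [hqr] at this
        exact le_trans (min_le_left _ _) this
      · have h4 : min (M p q) (M q r) ≤
            min (-Real.log (dist p.1 q.1)) (-Real.log (dist q.1 r.1)) :=
          min_le_min (M_le_L hpq) (M_le_L hqr)
        exact le_trans h4 (neg_log_ultra hu hpr)

lemma rel_level {p p' : U × ℝ} (h : treeRel p p') (hne : p.1 ≠ p'.1) :
    p.2 ≤ -Real.log (dist p.1 p'.1) := by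
  have hd : (0:ℝ) < dist p.1 p'.1 := dist_pos.2 hne
  have := (Real.log_le_iff_le_exp hd).2 h.2
  linarith

lemma M_rel_left (hu : ∀ x y z : U, dist x y ≤ max (dist x z) (dist z y))
    {p p' : U × ℝ} (h : treeRel p p') (q : U × ℝ) : M p q = M p' q := by
  have ht : p.2 = p'.2 := h.1
  by_cases hpp : p.1 = p'.1
  · by_cases hq : p.1 = q.1
    · rw [M_eq_of_eq hq, M_eq_of_eq (hpp ▸ hq), ht]
    · rw [M_eq_of_ne hq, M_eq_of_ne (hpp ▸ hq), ht, hpp]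
  · have hL : p.2 ≤ -Real.log (dist p.1 p'.1) := rel_level h hpp
    by_cases hq1 : q.1 = p.1
    · have hq2 : p'.1 ≠ q.1 := fun he => hpp ((hq1 ▸ he.symm : p.1 = p'.1))
      have hd : dist p'.1 q.1 = dist p.1 p'.1 := by rw [hq1, dist_comm]
      have hL' : p'.2 ≤ -Real.log (dist p.1 p'.1) := ht ▸ hL
      rw [M_eq_of_eq hq1.symm, M_eq_of_ne hq2, hd, ht, min_eq_right hL']
    · by_cases hq2 : q.1 = p'.1
      · have hq1' : p.1 ≠ q.1 := fun he => hq1 he.symm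
        have hd : dist p.1 q.1 = dist p.1 p'.1 := by rw [hq2]
        rw [M_eq_of_ne hq1', M_eq_of_eq hq2.symm, hd, min_eq_right hL, ht]
      · have hq1' : p.1 ≠ q.1 := fun he => hq1 he.symm
        have hq2' : p'.1 ≠ q.1 := fun he => hq2 he.symm
        rw [M_eq_of_ne hq1', M_eq_of_ne hq2']
        congr 1
        set a := -Real.log (dist p.1 q.1) with ha
        set b := -Real.log (dist p'.1 q.1) with hb
        set c := -Real.log (dist p.1 p'.1) with hc
        have hab : min a c ≤ b := by
          have := neg_log_ultra hu (x := p'.1) (y := p.1) (z := q.1) hq2'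
          rwa [dist_comm p'.1 p.1, min_comm, ← ha, ← hb, ← hc] at this
        have hba : min b c ≤ a := by
          have := neg_log_ultra hu (x := p.1) (y := p'.1) (z := q.1) hq1'
          rwa [min_comm, ← ha, ← hb, ← hc] at this
        rw [← ht]
        apply le_antisymm
        · refine le_min ?_ (min_le_right _ _)
          exact le_trans (le_min (min_le_left a p.2)
            (le_trans (min_le_right a p.2) hL)) hab
        · refine le_min ?_ (min_le_right _ _)
          exact le_trans (le_min (min_le_left b p.2)
            (le_trans (min_le_right b p.2) hL)) hba

end TreeAux

/-- For a complete ultrametric space `U` of diameter `≤ 1`, `D` is a well-defined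
metric on `T_U = (U × [0,∞)) / ∼`: it is independent of representatives, vanishes
exactly on equivalent pairs, is symmetric and satisfies the triangle inequality. -/
theorem stmt_15 {U : Type*} [MetricSpace U] [CompleteSpace U]
    (hu : ∀ x y z : U, dist x y ≤ max (dist x z) (dist z y))
    (hdiam : ∀ x y : U, dist x y ≤ 1) :
    (∀ p p' q q' : U × ℝ, 0 ≤ p.2 → 0 ≤ q.2 → treeRel p p' → treeRel q q' →
      treeDist p q = treeDist p' q') ∧
    (∀ p q : U × ℝ, 0 ≤ p.2 → 0 ≤ q.2 → (treeDist p q = 0 ↔ treeRel p q)) ∧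
    (∀ p q : U × ℝ, 0 ≤ p.2 → 0 ≤ q.2 → treeDist p q = treeDist q p) ∧
    (∀ p q r : U × ℝ, 0 ≤ p.2 → 0 ≤ q.2 → 0 ≤ r.2 →
      treeDist p r ≤ treeDist p q + treeDist q r) ∧
    ∀ p q : U × ℝ, 0 ≤ p.2 → 0 ≤ q.2 → 0 ≤ treeDist p q := by
  open TreeAux in
  refine ⟨?_, ?_, ?_, ?_, ?_⟩
  · -- well-definedness
    intro p p' q q' _ _ hp hq
    rw [treeDist_eq, treeDist_eq, M_rel_left hu hp q, M_symm, M_rel_left hu hq p',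
      M_symm, hp.1, hq.1]
  · -- vanishing iff related
    intro p q _ _
    rw [treeDist_eq]
    constructor
    · intro h0
      have h1 : M p q ≤ p.2 := M_le_left p q
      have h2 : M p q ≤ q.2 := M_le_right p q
      have hMp : M p q = p.2 := by linarith
      have hMq : M p q = q.2 := by linarith
      refine ⟨hMp ▸ hMq ▸ rfl, ?_⟩
      by_cases hpq : p.1 = q.1
      · rw [hpq, dist_self]; exact (Real.exp_pos _).le
      · have : p.2 ≤ -Real.log (dist p.1 q.1) := by
          have := M_le_L hpq
          linarith
        have hd : (0:ℝ) < dist p.1 q.1 := dist_pos.2 hpq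
        calc dist p.1 q.1 = Real.exp (Real.log (dist p.1 q.1)) := (Real.exp_log hd).symm
          _ ≤ Real.exp (-p.2) := Real.exp_le_exp.2 (by linarith)
    · intro ⟨hts, hd⟩
      by_cases hpq : p.1 = q.1
      · rw [M_eq_of_eq hpq, hts, min_self]; ring
      · have hL : p.2 ≤ -Real.log (dist p.1 q.1) := rel_level ⟨hts, hd⟩ hpq
        rw [M_eq_of_ne hpq, min_eq_right hL, ← hts, min_self]
        ring
  · -- symmetry
    intro p q _ _
    rw [treeDist_eq, treeDist_eq, M_symm]; ring
  · -- triangle inequality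
    intro p q r _ _ _
    rw [treeDist_eq, treeDist_eq, treeDist_eq]
    have h1 : min (M p q) (M q r) ≤ M p r := M_ultra hu p q r
    have h2 : max (M p q) (M q r) ≤ q.2 := max_le (M_le_right p q) (M_le_left q r)
    have h3 := max_add_min (M p q) (M q r)
    linarith
  · -- nonnegativity
    intro p q _ _
    rw [treeDist_eq]
    have h1 : M p q ≤ p.2 := M_le_left p q
    have h2 : M p q ≤ q.2 := M_le_right p q
    rcases le_total p.2 q.2 with h | h <;> linarith
end
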